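/- Let L be a finite distributive lattice, ℓ ∈ L a join-irreducible element, f_ℓ the threshold function, M an mv-CGS over L, and f_ℓ(M) the reduction of M via f_ℓ to the two-element lattice {⊥,⊤}. Then for every state formula φ (resp. path formula γ) of mv-ATL* and every state q (resp. path λ): [[φ]]_{M,q} ≥ ℓ if and only if [[φ]]_{f_ℓ(M),q} = ⊤ (resp. [[γ]]_{M,λ} ≥ ℓ iff [[γ]]_{f_ℓ(M),λ} = ⊤). -/

import Mathlib

/-!
For a join-prime `ℓ` of a finite lattice, the threshold map `x ↦ (ℓ ≤ x)` into the two-element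
lattice preserves all meets (always) and all joins (a finite join reaches `ℓ` only if one of its
terms does). Since the semantics of mv-ATL* is built from `σ`, `V`, meets and joins alone, any
map preserving arbitrary bounds commutes with it, formula by formula. In a distributive lattice
join-irreducible elements are join-prime, which gives the claim.
-/

/-- A concurrent game structure (CGS): availability function `d` (with every
`d a q` nonempty) and a deterministic transition function `t`. -/
structure CGS (Agt St Act : Type*) where
  d : Agt → St → Set Act
  d_nonempty : ∀ a q, (d a q).Nonempty
  t : St → (Agt → Act) → St

namespace CGS

variable {Agt St Act : Type*}

/-- An action profile `α` is available at state `q`. -/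
def Avail (G : CGS Agt St Act) (q : St) (α : Agt → Act) : Prop :=
  ∀ a, α a ∈ G.d a q

/-- `lam` is a path of `G`: each step is realized by some available profile. -/
def IsPath (G : CGS Agt St Act) (lam : ℕ → St) : Prop :=
  ∀ i, ∃ α, G.Avail (lam i) α ∧ G.t (lam i) α = lam (i + 1)

/-- A perfect-recall strategy for agent `a`: a choice of an available action
for every nonempty finite history, represented as (proper prefix, last state). -/
structure PRStrategy (G : CGS Agt St Act) (a : Agt) where
  act : List St → St → Act
  avail : ∀ h q, act h q ∈ G.d a q

/-- A collective perfect-recall strategy for the coalition `A`. -/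
def PRColl (G : CGS Agt St Act) (A : Set Agt) := (a : A) → PRStrategy G (a : Agt)

/-- The outcome set of a collective perfect-recall strategy `s` from state `q`:
all paths starting at `q` consistent with `s`. -/
def prOut (G : CGS Agt St Act) {A : Set Agt} (q : St) (s : PRColl G A) : Set (ℕ → St) :=
  { lam | lam 0 = q ∧ ∀ i, ∃ α, G.Avail (lam i) α ∧ G.t (lam i) α = lam (i + 1) ∧
      ∀ a : A, α (a : Agt) = (s a).act (List.ofFn fun j : Fin i => lam j) (lam i) }

end CGS

mutual
/-- State formulas of mv-ATL*. -/
inductive SForm (AP C Agt : Type) : Type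
  | const : C → SForm AP C Agt
  | atom  : AP → SForm AP C Agt
  | and   : SForm AP C Agt → SForm AP C Agt → SForm AP C Agt
  | or    : SForm AP C Agt → SForm AP C Agt → SForm AP C Agt
  | coop  : Set Agt → PForm AP C Agt → SForm AP C Agt
  | nec   : Set Agt → PForm AP C Agt → SForm AP C Agt
/-- Path formulas of mv-ATL*. -/
inductive PForm (AP C Agt : Type) : Type
  | state : SForm AP C Agt → PForm AP C Agt
  | and   : PForm AP C Agt → PForm AP C Agt → PForm AP C Agt
  | or    : PForm AP C Agt → PForm AP C Agt → PForm AP C Agt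
  | next  : PForm AP C Agt → PForm AP C Agt
  | untl  : PForm AP C Agt → PForm AP C Agt → PForm AP C Agt
  | wuntl : PForm AP C Agt → PForm AP C Agt → PForm AP C Agt
end

variable {Agt St Act AP C : Type} {L : Type*} [CompleteLattice L]

mutual
/-- Multi-valued truth value of a state formula at a state. -/
noncomputable def sval (G : CGS Agt St Act) (σ : C → L) (V : AP → St → L) :
    SForm AP C Agt → St → L
  | .const c, _ => σ c
  | .atom p, q => V p q
  | .and φ ψ, q => sval G σ V φ q ⊓ sval G σ V ψ q
  | .or φ ψ, q => sval G σ V φ q ⊔ sval G σ V ψ q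
  | .coop A γ, q => ⨆ s : CGS.PRColl G A, ⨅ lam ∈ CGS.prOut G q s, pval G σ V γ lam
  | .nec A γ, q => ⨅ s : CGS.PRColl G A, ⨆ lam ∈ CGS.prOut G q s, pval G σ V γ lam

/-- Multi-valued truth value of a path formula on a path. -/
noncomputable def pval (G : CGS Agt St Act) (σ : C → L) (V : AP → St → L) :
    PForm AP C Agt → (ℕ → St) → L
  | .state φ, lam => sval G σ V φ (lam 0)
  | .and γ δ, lam => pval G σ V γ lam ⊓ pval G σ V δ lam
  | .or γ δ, lam => pval G σ V γ lam ⊔ pval G σ V δ lam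
  | .next γ, lam => pval G σ V γ (fun k => lam (k + 1))
  | .untl γ δ, lam =>
      ⨆ i : ℕ, (pval G σ V δ (fun k => lam (k + i)) ⊓
        ⨅ j : Fin i, pval G σ V γ (fun k => lam (k + (j : ℕ))))
  | .wuntl γ δ, lam =>
      (⨅ i : ℕ, pval G σ V γ (fun k => lam (k + i))) ⊔
      ⨆ i : ℕ, (pval G σ V δ (fun k => lam (k + i)) ⊓
        ⨅ j : Fin i, pval G σ V γ (fun k => lam (k + (j : ℕ))))
end

/-- A join-irreducible element of a lattice with bottom. -/
def JoinIrred {L : Type*} [Lattice L] [OrderBot L] (ℓ : L) : Prop :=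
  ℓ ≠ ⊥ ∧ ∀ x y : L, ℓ = x ⊔ y → ℓ = x ∨ ℓ = y

section ThresholdReduction

theorem JoinIrred.supPrime {α : Type*} [Lattice α] [OrderBot α]
    (hdistrib : ∀ x y z : α, x ⊓ (y ⊔ z) = (x ⊓ y) ⊔ (x ⊓ z)) {ℓ : α} (hℓ : JoinIrred ℓ) :
    SupPrime ℓ := by
  refine ⟨fun hmin => hℓ.1 hmin.eq_bot, fun x y h => ?_⟩
  have hsplit : ℓ = (ℓ ⊓ x) ⊔ (ℓ ⊓ y) := by rw [← hdistrib, inf_eq_left.2 h]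
  exact (hℓ.2 _ _ hsplit).imp (fun hx => hx.le.trans inf_le_right)
    (fun hy => hy.le.trans inf_le_right)

theorem SupPrime.le_sSup_iff_of_finite {α : Type*} [CompleteLattice α] {ℓ : α}
    (hℓ : SupPrime ℓ) {s : Set α} (hs : s.Finite) : ℓ ≤ sSup s ↔ ∃ x ∈ s, ℓ ≤ x := by
  rw [← hs.coe_toFinset, ← Finset.sup_id_eq_sSup, hℓ.le_finset_sup]
  simp

def SupPrime.thresholdHom {α : Type*} [CompleteLattice α] [Finite α] {ℓ : α}
    (hℓ : SupPrime ℓ) : CompleteLatticeHom α Prop where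
  toFun x := ℓ ≤ x
  map_sInf' s := by simp [sInf_image, le_sInf_iff]
  map_sSup' s := by simp [sSup_image, hℓ.le_sSup_iff_of_finite s.toFinite]

variable {L' : Type*} [CompleteLattice L']

mutual

theorem CompleteLatticeHom.map_sval (f : CompleteLatticeHom L L') (G : CGS Agt St Act)
    (σ : C → L) (V : AP → St → L) (φ : SForm AP C Agt) (q : St) :
    f (sval G σ V φ q) = sval G (fun c => f (σ c)) (fun p q' => f (V p q')) φ q := by
  cases φ with
  | const c => rfl
  | atom p => rfl
  | and φ ψ => rw [sval, sval, map_inf, f.map_sval G σ V φ, f.map_sval G σ V ψ]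
  | or φ ψ => rw [sval, sval, map_sup, f.map_sval G σ V φ, f.map_sval G σ V ψ]
  | coop A γ => simp only [sval, map_iSup, map_iInf, f.map_pval G σ V γ]
  | nec A γ => simp only [sval, map_iSup, map_iInf, f.map_pval G σ V γ]

theorem CompleteLatticeHom.map_pval (f : CompleteLatticeHom L L') (G : CGS Agt St Act)
    (σ : C → L) (V : AP → St → L) (γ : PForm AP C Agt) (lam : ℕ → St) :
    f (pval G σ V γ lam) = pval G (fun c => f (σ c)) (fun p q' => f (V p q')) γ lam := by
  cases γ with
  | state φ => exact f.map_sval G σ V φ (lam 0)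
  | and γ δ => rw [pval, pval, map_inf, f.map_pval G σ V γ, f.map_pval G σ V δ]
  | or γ δ => rw [pval, pval, map_sup, f.map_pval G σ V γ, f.map_pval G σ V δ]
  | next γ => exact f.map_pval G σ V γ _
  | untl γ δ =>
    simp only [pval, map_iSup, map_inf, map_iInf, f.map_pval G σ V γ, f.map_pval G σ V δ]
  | wuntl γ δ =>
    simp only [pval, map_sup, map_iSup, map_inf, map_iInf, f.map_pval G σ V γ,
      f.map_pval G σ V δ]

end

end ThresholdReduction

/-- Corollary for threshold reductions: for a join-irreducible `ℓ` of a finite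
distributive lattice, `[[φ]]_{M,ξ} ≥ ℓ` iff `[[φ]]_{f_ℓ(M),ξ} = ⊤`, where the
two-element lattice is realized as `Prop` and `f_ℓ x = (ℓ ≤ x)`. -/
theorem stmt_13 {L : Type*} [CompleteLattice L] [Fintype L]
    (hdistrib : ∀ x y z : L, x ⊓ (y ⊔ z) = (x ⊓ y) ⊔ (x ⊓ z))
    (ℓ : L) (hℓ : JoinIrred ℓ)
    {Agt St Act AP C : Type} [Fintype Agt] [Fintype St] [Fintype Act]
    [Nonempty Agt] [Nonempty St] [Nonempty Act]
    (G : CGS Agt St Act) (σ : C → L) (V : AP → St → L) :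
    (∀ (φ : SForm AP C Agt) (q : St),
      ℓ ≤ sval G σ V φ q ↔
        sval G (fun c => (ℓ ≤ σ c : Prop)) (fun p q' => (ℓ ≤ V p q' : Prop)) φ q = (⊤ : Prop)) ∧
    (∀ (γ : PForm AP C Agt) (lam : ℕ → St), G.IsPath lam →
      (ℓ ≤ pval G σ V γ lam ↔
        pval G (fun c => (ℓ ≤ σ c : Prop)) (fun p q' => (ℓ ≤ V p q' : Prop)) γ lam = (⊤ : Prop))) := by
  let f := (hℓ.supPrime hdistrib).thresholdHom
  refine ⟨fun φ q => ?_, fun γ lam _ => ?_⟩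
  · rw [Prop.top_eq_true, eq_iff_iff, iff_true]
    exact Iff.of_eq (f.map_sval G σ V φ q)
  · rw [Prop.top_eq_true, eq_iff_iff, iff_true]
    exact Iff.of_eq (f.map_pval G σ V γ lam)
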